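/- Let π be an admissible switching process with constants {p_σ}_{σ∈Σ} and {α_σ}_{σ∈Σ} such that Σ_{σ∈Σ} α_σ π_σ(t) = 1 for all t. Let r be any ℝ^m-valued process on ℤ such that all the variables z^r_w(t), w ∈ Σ⁺, and r(t) are square integrable. Then for all t ∈ ℤ and all w ∈ Σ⁺: r(t) = Σ_{σ∈Σ} α_σ √(p_σ) z^r_σ(t+1) and z^r_w(t) = Σ_{σ∈Σ} α_σ √(p_σ) z^r_{wσ}(t+1); consequently the closed L²-subspace H^r_{t,+} generated by the components of {z^r_w(t)}_{w∈Σ⁺} ∪ {r(t)} is contained in the closed L²-subspace H^r_{t+1} generated by the components of {z^r_w(t+1)}_{w∈Σ⁺}. -/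

import Mathlib

open MeasureTheory
open scoped Classical Matrix Kronecker

namespace GLSS

variable {Ω : Type*} [MeasurableSpace Ω]

/-- `piW π w t` is the product `π_{σ₁}(t-k+1)⋯π_{σ_k}(t)` for the word `w = σ₁⋯σ_k`
(and `1` for the empty word). -/
noncomputable def piW {Λ : Type*} (π : ℤ → Ω → Λ → ℝ) (w : List Λ) (t : ℤ) (ω : Ω) : ℝ :=
  ∏ i : Fin w.length, π (t - (w.length : ℤ) + 1 + ((i : ℕ) : ℤ)) ω (w.get i)

/-- `p_w = p_{σ₁}⋯p_{σ_k}`. -/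
noncomputable def pW {Λ : Type*} (p : Λ → ℝ) (w : List Λ) : ℝ := (w.map p).prod

/-- `z^r_w(t) = r(t-|w|) π_w(t-1) / √(p_w)`.  For `w = []` this is `r(t)` itself. -/
noncomputable def zW {Λ : Type*} {mι : Type*} (π : ℤ → Ω → Λ → ℝ) (p : Λ → ℝ)
    (r : ℤ → Ω → mι → ℝ) (w : List Λ) (t : ℤ) (ω : Ω) : mι → ℝ :=
  fun i => r (t - (w.length : ℤ)) ω i * piW π w (t - 1) ω / Real.sqrt (pW p w)

/-- A word is admissible w.r.t. the edge set `E` if all pairs of consecutive letters lie in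
`E`; the set of such (nonempty) words is the set `L` of admissible words. -/
def chainIn {Λ : Type*} (E : Set (Λ × Λ)) (w : List Λ) : Prop :=
  w.Chain' (fun a b => (a, b) ∈ E)

/-- The σ-algebra `F^{π,-}_t` generated by `{π(k)}_{k<t}`. -/
def sigmaPast {Λ : Type*} (π : ℤ → Ω → Λ → ℝ) (t : ℤ) : MeasurableSpace Ω :=
  ⨆ (k : ℤ) (_ : k < t), MeasurableSpace.comap (π k) inferInstance

/-- The σ-algebra `F^{π,+}_t` generated by `{π(k)}_{k≥t}`. -/
def sigmaFuture {Λ : Type*} (π : ℤ → Ω → Λ → ℝ) (t : ℤ) : MeasurableSpace Ω :=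
  ⨆ (k : ℤ) (_ : t ≤ k), MeasurableSpace.comap (π k) inferInstance

/-- The σ-algebra `F^r_t` generated by `{r(k)}_{k≤t}`. -/
def sigmaUpTo {β : Type*} [MeasurableSpace β] (r : ℤ → Ω → β) (t : ℤ) : MeasurableSpace Ω :=
  ⨆ (k : ℤ) (_ : k ≤ t), MeasurableSpace.comap (r k) inferInstance

/-- Conditional independence of the σ-algebras `m₁` and `m₂` given `m'`. -/
def CondIndepSigma (μ : Measure Ω) (m' m₁ m₂ : MeasurableSpace Ω) : Prop :=
  ∀ A B : Set Ω, MeasurableSet[m₁] A → MeasurableSet[m₂] B →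
    μ[(A ∩ B).indicator (fun _ => (1 : ℝ)) | m'] =ᵐ[μ]
      fun ω => ((μ[A.indicator (fun _ => (1 : ℝ)) | m']) ω) *
        ((μ[B.indicator (fun _ => (1 : ℝ)) | m']) ω)

/-- Admissible switching process (Definition 1 of the paper), with edge set `E`,
constants `{p_σ}` and `{α_σ}`. -/
structure IsAdmissible {Λ : Type*} [Fintype Λ] (μ : Measure Ω) (π : ℤ → Ω → Λ → ℝ)
    (E : Set (Λ × Λ)) (p : Λ → ℝ) (α : Λ → ℝ) : Prop where
  meas : ∀ t : ℤ, Measurable (π t)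
  sqInt : ∀ (w : List Λ) (t : ℤ), MemLp (piW π w t) 2 μ
  edge_total : ∀ σ : Λ, ∃ σ' : Λ, (σ, σ') ∈ E
  zero_off : ∀ w : List Λ, w ≠ [] → ¬ chainIn E w → ∀ t ω, piW π w t ω = 0
  p_pos : ∀ σ : Λ, 0 < p σ
  cond_pair : ∀ (w v : List Λ), w ≠ [] → v ≠ [] → ∀ (σ σ' : Λ) (t : ℤ),
    μ[fun ω => piW π (w ++ [σ]) t ω * piW π (v ++ [σ']) t ω | sigmaPast π t] =ᵐ[μ]
      (if σ = σ' ∧ chainIn E (w ++ [σ]) ∧ chainIn E (v ++ [σ]) then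
        (fun ω => p σ * (piW π w (t - 1) ω * piW π v (t - 1) ω)) else 0)
  cond_single : ∀ (w : List Λ), w ≠ [] → ∀ (σ σ' : Λ) (t : ℤ),
    μ[fun ω => piW π (w ++ [σ]) t ω * piW π [σ'] t ω | sigmaPast π t] =ᵐ[μ]
      (if σ = σ' ∧ chainIn E (w ++ [σ]) then (fun ω => p σ * piW π w (t - 1) ω) else 0)
  cond_letters : ∀ (σ σ' : Λ), σ ≠ σ' → ∀ t : ℤ,
    μ[fun ω => piW π [σ] t ω * piW π [σ'] t ω | sigmaPast π t] =ᵐ[μ] 0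
  alpha_sum : ∀ (t : ℤ) (ω : Ω), ∑ σ : Λ, α σ * piW π [σ] t ω = 1
  mean_stat : ∀ (w : List Λ) (t τ : ℤ), ∫ ω, piW π w t ω ∂μ = ∫ ω, piW π w (t + τ) ω ∂μ
  cov_stat : ∀ (w v : List Λ) (t s τ : ℤ),
    ∫ ω, piW π w t ω * piW π v s ω ∂μ = ∫ ω, piW π w (t + τ) ω * piW π v (s + τ) ω ∂μ

/-- Zero-mean wide-sense stationary w.r.t. `π` (ZMWSII) process. -/
structure IsZMWSII {Λ : Type*} [Fintype Λ] {mι : Type*} [Fintype mι]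
    (μ : Measure Ω) (π : ℤ → Ω → Λ → ℝ) (p : Λ → ℝ) (r : ℤ → Ω → mι → ℝ) : Prop where
  condIndep : ∀ t : ℤ, CondIndepSigma μ (sigmaPast π t) (sigmaUpTo r t) (sigmaFuture π t)
  sqInt : ∀ (w : List Λ) (t : ℤ), MemLp (zW π p r w t) 2 μ
  zeroMean : ∀ (w : List Λ) (t : ℤ) (i : mι), ∫ ω, zW π p r w t ω i ∂μ = 0
  jointWSS : ∀ (w v : List Λ) (t s τ : ℤ) (i j : mι),
    ∫ ω, zW π p r w t ω i * zW π p r v s ω j ∂μ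
      = ∫ ω, zW π p r w (t + τ) ω i * zW π p r v (s + τ) ω j ∂μ

/-- White noise w.r.t. `π`. -/
structure IsWhiteNoise {Λ : Type*} [Fintype Λ] [DecidableEq Λ] {mι : Type*} [Fintype mι]
    [DecidableEq mι] (μ : Measure Ω) (π : ℤ → Ω → Λ → ℝ) (p : Λ → ℝ)
    (r : ℤ → Ω → mι → ℝ) extends IsZMWSII μ π p r : Prop where
  orth : ∀ (w : List Λ), w ≠ [] → ∀ (σ : Λ) (v : List Λ) (t : ℤ) (i j : mι),
    ∫ ω, zW π p r w t ω i * zW π p r (σ :: v) t ω j ∂μ =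
      if w = σ :: v then ∫ ω, zW π p r [σ] t ω i * zW π p r [σ] t ω j ∂μ else 0
  nonsing : ∀ (σ : Λ) (t : ℤ),
    IsUnit (Matrix.of fun i j : mι => ∫ ω, zW π p r [σ] t ω i * zW π p r [σ] t ω j ∂μ)

/-- `A_w = A_{σ_k} ⋯ A_{σ₁}` for `w = σ₁⋯σ_k` (`A_ε = I`). -/
noncomputable def Aword {Λ : Type*} {ι : Type*} [Fintype ι] [DecidableEq ι]
    (A : Λ → Matrix ι ι ℝ) (w : List Λ) : Matrix ι ι ℝ :=
  w.foldl (fun M σ => A σ * M) 1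

/-- Stationary generalized linear switched system (sGLSS) of `(y, u, π)`, with matrices
`({A_σ, K_σ, B_σ}, C, D, F)`, state process `x` and noise process `v`. -/
structure IsSGLSS {Λ : Type*} [Fintype Λ] [DecidableEq Λ]
    {ι υ ν γ : Type*} [Fintype ι] [DecidableEq ι] [Fintype υ] [DecidableEq υ]
    [Fintype ν] [DecidableEq ν] [Fintype γ] [DecidableEq γ]
    (μ : Measure Ω) (π : ℤ → Ω → Λ → ℝ) (E : Set (Λ × Λ)) (p : Λ → ℝ)
    (A : Λ → Matrix ι ι ℝ) (K : Λ → Matrix ι ν ℝ) (B : Λ → Matrix ι υ ℝ)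
    (C : Matrix γ ι ℝ) (D : Matrix γ υ ℝ) (F : Matrix γ ν ℝ)
    (x : ℤ → Ω → ι → ℝ) (v : ℤ → Ω → ν → ℝ) (u : ℤ → Ω → υ → ℝ)
    (y : ℤ → Ω → γ → ℝ) : Prop where
  state_eq : ∀ t : ℤ, ∀ᵐ ω ∂μ,
    x (t + 1) ω = ∑ σ : Λ, π t ω σ • (A σ *ᵥ x t ω + B σ *ᵥ u t ω + K σ *ᵥ v t ω)
  output_eq : ∀ t : ℤ, ∀ᵐ ω ∂μ, y t ω = C *ᵥ x t ω + D *ᵥ u t ω + F *ᵥ v t ω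
  noise_white : IsWhiteNoise μ π p (fun t ω => Sum.elim (v t ω) (u t ω))
  joint_zmwsii : IsZMWSII μ π p (fun t ω => Sum.elim (x t ω) (Sum.elim (v t ω) (u t ω)))
  state_noise_orth : ∀ (σ : Λ) (t : ℤ) (i : ι) (j : ν ⊕ υ),
    ∫ ω, zW π p x [σ] t ω i *
      zW π p (fun t ω => Sum.elim (v t ω) (u t ω)) [σ] t ω j ∂μ = 0
  state_noise_orth' : ∀ (s : List Λ), s ≠ [] → ∀ (t : ℤ) (i : ι) (j : ν ⊕ υ),
    ∫ ω, x t ω i * zW π p (fun t ω => Sum.elim (v t ω) (u t ω)) s t ω j ∂μ = 0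
  stable : ∀ z ∈ spectrum ℂ
      ((∑ σ : Λ, p σ • Matrix.kroneckerMap (· * ·) (A σ) (A σ)).map (algebraMap ℝ ℂ)),
    ‖z‖ < 1
  off_edge : ∀ σ₁ σ₂ : Λ, (σ₁, σ₂) ∉ E →
    A σ₂ * A σ₁ = 0 ∧ ∀ t : ℤ,
      A σ₂ * Matrix.fromCols (K σ₁) (B σ₁) *
        Matrix.of (fun i j : ν ⊕ υ =>
          ∫ ω, zW π p (fun t ω => Sum.elim (v t ω) (u t ω)) [σ₁] t ω i *
            zW π p (fun t ω => Sum.elim (v t ω) (u t ω)) [σ₁] t ω j ∂μ) = 0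

/-- Autonomous stationary generalized linear switched system (asGLSS) of `(y, π)`, with
matrices `({A_σ, K_σ}, C, F)`, state process `x` and noise process `v`. -/
structure IsASGLSS {Λ : Type*} [Fintype Λ] [DecidableEq Λ]
    {ι ν γ : Type*} [Fintype ι] [DecidableEq ι] [Fintype ν] [DecidableEq ν]
    [Fintype γ] [DecidableEq γ]
    (μ : Measure Ω) (π : ℤ → Ω → Λ → ℝ) (E : Set (Λ × Λ)) (p : Λ → ℝ)
    (A : Λ → Matrix ι ι ℝ) (K : Λ → Matrix ι ν ℝ)
    (C : Matrix γ ι ℝ) (F : Matrix γ ν ℝ)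
    (x : ℤ → Ω → ι → ℝ) (v : ℤ → Ω → ν → ℝ) (y : ℤ → Ω → γ → ℝ) : Prop where
  state_eq : ∀ t : ℤ, ∀ᵐ ω ∂μ,
    x (t + 1) ω = ∑ σ : Λ, π t ω σ • (A σ *ᵥ x t ω + K σ *ᵥ v t ω)
  output_eq : ∀ t : ℤ, ∀ᵐ ω ∂μ, y t ω = C *ᵥ x t ω + F *ᵥ v t ω
  noise_white : IsWhiteNoise μ π p v
  joint_zmwsii : IsZMWSII μ π p (fun t ω => Sum.elim (x t ω) (v t ω))
  state_noise_orth : ∀ (σ : Λ) (t : ℤ) (i : ι) (j : ν),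
    ∫ ω, zW π p x [σ] t ω i * zW π p v [σ] t ω j ∂μ = 0
  state_noise_orth' : ∀ (s : List Λ), s ≠ [] → ∀ (t : ℤ) (i : ι) (j : ν),
    ∫ ω, x t ω i * zW π p v s t ω j ∂μ = 0
  stable : ∀ z ∈ spectrum ℂ
      ((∑ σ : Λ, p σ • Matrix.kroneckerMap (· * ·) (A σ) (A σ)).map (algebraMap ℝ ℂ)),
    ‖z‖ < 1
  off_edge : ∀ σ₁ σ₂ : Λ, (σ₁, σ₂) ∉ E →
    A σ₂ * A σ₁ = 0 ∧ ∀ t : ℤ,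
      A σ₂ * K σ₁ *
        Matrix.of (fun i j : ν => ∫ ω, zW π p v [σ₁] t ω i * zW π p v [σ₁] t ω j ∂μ) = 0

/-- `f` belongs to the closed subspace of `L²(μ)` generated by the set `S`:
it is an `L²`-limit of finite linear combinations of elements of `S`. -/
def memL2Span (μ : Measure Ω) (S : Set (Ω → ℝ)) (f : Ω → ℝ) : Prop :=
  ∀ ε : ℝ, 0 < ε → ∃ g ∈ Submodule.span ℝ S, eLpNorm (f - g) 2 μ < ENNReal.ofReal ε

/-- `f` is orthogonal in `L²(μ)` to the closed subspace generated by `S`. -/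
def orthToSpan (μ : Measure Ω) (S : Set (Ω → ℝ)) (f : Ω → ℝ) : Prop :=
  ∀ g : Ω → ℝ, MemLp g 2 μ → memL2Span μ S g → ∫ ω, f ω * g ω ∂μ = 0

/-- `g = E_l[f ∣ S]`: the orthogonal projection of `f` onto the closed linear span of `S`
in `L²(μ)`, characterized by `g` lying in the closed span and `f - g` being orthogonal to
every generator. -/
def IsLinearProj (μ : Measure Ω) (S : Set (Ω → ℝ)) (f g : Ω → ℝ) : Prop :=
  MemLp g 2 μ ∧ memL2Span μ S g ∧ ∀ h ∈ S, ∫ ω, (f ω - g ω) * h ω ∂μ = 0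

/-- The components of `{z^r_w(t)}_{w ∈ Σ⁺}` (generators of `H^r_t`). -/
def pastSpan {Λ : Type*} {mι : Type*} (π : ℤ → Ω → Λ → ℝ) (p : Λ → ℝ)
    (r : ℤ → Ω → mι → ℝ) (t : ℤ) : Set (Ω → ℝ) :=
  {f | ∃ (w : List Λ) (i : mι), w ≠ [] ∧ f = fun ω => zW π p r w t ω i}

/-- The components of `{z^r_w(t)}_{w ∈ Σ⁺} ∪ {r(t)}` (generators of `H^r_{t,+}`). -/
def pastPlusSpan {Λ : Type*} {mι : Type*} (π : ℤ → Ω → Λ → ℝ) (p : Λ → ℝ)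
    (r : ℤ → Ω → mι → ℝ) (t : ℤ) : Set (Ω → ℝ) :=
  {f | ∃ (w : List Λ) (i : mι), f = fun ω => zW π p r w t ω i}

/-- Unconditional convergence of the series `∑ f a` to `g` in the mean-square sense. -/
def HasSumL2 {κ : Type*} (μ : Measure Ω) (f : κ → Ω → ℝ) (g : Ω → ℝ) : Prop :=
  ∀ ε : ℝ, 0 < ε → ∃ s : Finset κ, ∀ T : Finset κ, s ⊆ T →
    eLpNorm (fun ω => (∑ a ∈ T, f a ω) - g ω) 2 μ < ENNReal.ofReal ε


lemma piW_single {Λ : Type*} (π : ℤ → Ω → Λ → ℝ) (σ : Λ) (t : ℤ) (ω : Ω) :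
    piW π [σ] t ω = π t ω σ := by
  simp [piW]

lemma piW_append {Λ : Type*} (π : ℤ → Ω → Λ → ℝ) (w : List Λ) (σ : Λ) (t : ℤ) (ω : Ω) :
    piW π (w ++ [σ]) t ω = piW π w (t - 1) ω * π t ω σ := by
  unfold piW
  have h : (w ++ [σ]).length = w.length + 1 := by simp
  rw [Fintype.prod_equiv (finCongr h)
    _ (fun i : Fin (w.length + 1) =>
      π (t - ((w ++ [σ]).length : ℤ) + 1 + ((i : ℕ) : ℤ)) ω ((w ++ [σ]).get (Fin.cast h.symm i)))
    (fun i => by rw [finCongr_apply]; rfl)]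
  rw [Fin.prod_univ_castSucc]
  congr 1
  · apply Finset.prod_congr rfl
    intro i _
    have : ((w ++ [σ]).get (Fin.cast h.symm i.castSucc)) = w.get i := by
      simp [List.getElem_append, i.isLt]
    rw [this]
    congr 1
    simp only [Fin.coe_castSucc]
    push_cast [h]
    omega
  · have : ((w ++ [σ]).get (Fin.cast h.symm (Fin.last w.length))) = σ := by
      simp [List.getElem_append]
    rw [this]
    congr 1
    simp only [Fin.val_last]
    push_cast [h]
    omega

lemma pW_pos {Λ : Type*} {p : Λ → ℝ} (hp : ∀ σ, 0 < p σ) (w : List Λ) : 0 < pW p w := by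
  induction w with
  | nil => simp [pW]
  | cons a l ih => simpa [pW, List.map_cons] using mul_pos (hp a) (by simpa [pW] using ih)

lemma zW_expand {Λ : Type*} [Fintype Λ] {mι : Type*}
    (π : ℤ → Ω → Λ → ℝ) (p α : Λ → ℝ) (hp : ∀ σ, 0 < p σ)
    (halpha : ∀ (t : ℤ) (ω : Ω), ∑ σ : Λ, α σ * piW π [σ] t ω = 1)
    (r : ℤ → Ω → mι → ℝ) (w : List Λ) (t : ℤ) (ω : Ω) (i : mι) :
    zW π p r w t ω i =
      ∑ σ : Λ, α σ * (Real.sqrt (p σ) * zW π p r (w ++ [σ]) (t + 1) ω i) := by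
  have hpW : 0 < pW p w := pW_pos hp w
  have key : ∀ σ : Λ, α σ * (Real.sqrt (p σ) * zW π p r (w ++ [σ]) (t + 1) ω i)
      = α σ * piW π [σ] t ω * zW π p r w t ω i := by
    intro σ
    have h1 : piW π (w ++ [σ]) (t + 1 - 1) ω = piW π w (t - 1) ω * π t ω σ := by
      rw [show t + 1 - 1 = t from by ring, piW_append]
    have h2 : pW p (w ++ [σ]) = pW p w * p σ := by simp [pW]
    have h3 : Real.sqrt (pW p w) ≠ 0 := (Real.sqrt_pos.mpr hpW).ne'
    have h4 : Real.sqrt (p σ) ≠ 0 := (Real.sqrt_pos.mpr (hp σ)).ne'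
    unfold zW
    rw [h1, h2, Real.sqrt_mul hpW.le, piW_single]
    have h5 : (t + 1 - ((w ++ [σ]).length : ℤ)) = t - (w.length : ℤ) := by
      simp only [List.length_append, List.length_singleton]
      push_cast
      ring
    rw [h5]
    field_simp
  rw [Finset.sum_congr rfl (fun σ _ => key σ), ← Finset.sum_mul, halpha t ω, one_mul]

/-- For an admissible `π` one has `r(t) = ∑_σ α_σ √(p_σ) z^r_σ(t+1)` and
`z^r_w(t) = ∑_σ α_σ √(p_σ) z^r_{wσ}(t+1)`; consequently `H^r_{t,+} ⊆ H^r_{t+1}`. -/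
theorem stmt18
    {Ω : Type*} [MeasurableSpace Ω] (μ : Measure Ω) [IsProbabilityMeasure μ]
    {Λ : Type*} [Fintype Λ] [DecidableEq Λ]
    {mι : Type*} [Fintype mι]
    (π : ℤ → Ω → Λ → ℝ) (E : Set (Λ × Λ)) (p α : Λ → ℝ)
    (hadm : IsAdmissible μ π E p α)
    (r : ℤ → Ω → mι → ℝ)
    (hsq : ∀ (w : List Λ) (t : ℤ), MemLp (zW π p r w t) 2 μ) :
    (∀ (t : ℤ) (ω : Ω) (i : mι),
      r t ω i = ∑ σ : Λ, α σ * (Real.sqrt (p σ) * zW π p r [σ] (t + 1) ω i)) ∧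
    (∀ (w : List Λ), w ≠ [] → ∀ (t : ℤ) (ω : Ω) (i : mι),
      zW π p r w t ω i =
        ∑ σ : Λ, α σ * (Real.sqrt (p σ) * zW π p r (w ++ [σ]) (t + 1) ω i)) ∧
    ∀ (t : ℤ) (f : Ω → ℝ),
      memL2Span μ (pastPlusSpan π p r t) f → memL2Span μ (pastSpan π p r (t + 1)) f := by
  have hp := hadm.p_pos
  have halpha := hadm.alpha_sum
  have key := fun (w : List Λ) (t : ℤ) (ω : Ω) (i : mι) =>
    zW_expand π p α hp halpha r w t ω i
  refine ⟨?_, ?_, ?_⟩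
  · intro t ω i
    have h := key [] t ω i
    have h0 : zW π p r [] t ω i = r t ω i := by
      simp [zW, piW, pW]
    rw [h0] at h
    simpa using h
  · intro w _ t ω i
    exact key w t ω i
  · intro t f hf ε hε
    obtain ⟨g, hg, hgε⟩ := hf ε hε
    refine ⟨g, ?_, hgε⟩
    have hsub : pastPlusSpan π p r t ⊆
        ↑(Submodule.span ℝ (pastSpan π p r (t + 1))) := by
      rintro f ⟨w, i, rfl⟩
      have heq : (fun ω => zW π p r w t ω i)
          = ∑ σ : Λ, (α σ * Real.sqrt (p σ)) •
              (fun ω => zW π p r (w ++ [σ]) (t + 1) ω i) := by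
        funext ω
        rw [key w t ω i]
        simp [Finset.sum_apply, mul_assoc]
      rw [heq]
      exact Submodule.sum_mem _ fun σ _ =>
        Submodule.smul_mem _ _
          (Submodule.subset_span ⟨w ++ [σ], i, by simp, rfl⟩)
    exact Submodule.span_le.mpr hsub hg

end GLSS
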